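/- If the braiding data is non-degenerate, i.e., ⟨y^λ, y^0⟩ = δ_{λ,0} w for all λ (where w = Σ_λ d_λ²), then w = |z|² where z = Σ_λ d_λ² ω_λ. -/

import Mathlib

/-!
Pair the non-degeneracy relations with the weights `d_λ ω_λ`. Summed against `δ_{λ,0} w` this
gives `w`. Expanding `⟨y^λ, y^0⟩` instead, unitarity of the phases cancels `ω_λ`, and
Frobenius reciprocity turns the sum over `λ` into the dimension identity
`∑_λ N_{λ,μ}^ν d_λ = d_ν d_μ`; what is left factors as `z · z̄ = |z|²`.
-/

open Finset ComplexConjugate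

section FusionWeights

variable {Δ : Type*} [Fintype Δ]

theorem sum_fusion_mul_dim_left {bar : Δ → Δ} {Nc : Δ → Δ → Δ → ℕ} {d : Δ → ℝ}
    (hFrob : ∀ l m n, Nc l m n = Nc n (bar m) l) (hdbar : ∀ l, d (bar l) = d l)
    (hdim : ∀ l m, ∑ n, (Nc l m n : ℝ) * d n = d l * d m) (m n : Δ) :
    ∑ l, (Nc l m n : ℂ) * d l = d n * d m := by
  have h : ∑ l, (Nc l m n : ℝ) * d l = d n * d m := by
    simpa only [← hFrob, hdbar] using hdim n (bar m)
  exact_mod_cast congrArg ((↑) : ℝ → ℂ) h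

theorem sum_dim_mul_phase_mul_inner_eq_normSq {Nc : Δ → Δ → Δ → ℕ} {d : Δ → ℝ}
    {ω : Δ → ℂ} {Y : Δ → Δ → ℂ} (hω : ∀ l, ‖ω l‖ = 1)
    (hcol : ∀ m n, ∑ l, (Nc l m n : ℂ) * d l = d n * d m)
    (hY : ∀ m n, Y m n = ∑ l, (ω m * ω n / ω l) * (Nc m n l : ℂ) * (d l : ℂ)) :
    ∑ l, (d l : ℂ) * ω l * ∑ m, star (Y l m) * d m =
      Complex.normSq (∑ l, (d l : ℂ) ^ 2 * ω l) := by
  have hunit : ∀ l, ω l * conj (ω l) = 1 := fun l => by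
    rw [Complex.mul_conj, Complex.normSq_eq_norm_sq, hω, one_pow, Complex.ofReal_one]
  have hsummand : ∀ l m n, (d l : ℂ) * ω l * (star (ω l * ω m / ω n * Nc l m n * d n) * d m) =
      (Nc l m n * d l) * (d n * d m * ω n * conj (ω m)) := fun l m n => by
    have hinv : star (ω n)⁻¹ = ω n := by
      rw [RCLike.inv_eq_conj (hω n), Complex.star_def, Complex.conj_conj]
    simp only [star_mul', div_eq_mul_inv, hinv, star_natCast,
      Complex.star_def, Complex.conj_ofReal]
    linear_combination (Nc l m n * d l * d n * d m * ω n * conj (ω m)) * hunit l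
  calc ∑ l, (d l : ℂ) * ω l * ∑ m, star (Y l m) * d m
      = ∑ m, ∑ n, ∑ l, (Nc l m n * d l) * (d n * d m * ω n * conj (ω m)) := by
        simp only [hY, star_sum, sum_mul, mul_sum, hsummand]
        rw [sum_comm]
        exact sum_congr rfl fun m _ => sum_comm
    _ = ∑ m, ∑ n, ((d n : ℂ) ^ 2 * ω n) * ((d m : ℂ) ^ 2 * conj (ω m)) := by
        refine sum_congr rfl fun m _ => sum_congr rfl fun n _ => ?_
        rw [← sum_mul, hcol]
        ring
    _ = Complex.normSq (∑ l, (d l : ℂ) ^ 2 * ω l) := by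
        rw [sum_comm, ← sum_mul_sum, ← Complex.mul_conj, map_sum]
        simp only [map_mul, map_pow, Complex.conj_ofReal]

end FusionWeights

theorem global_index_eq_normSq_of_nondegenerate_general
    {Δ : Type*} [Fintype Δ] [DecidableEq Δ] (z0 : Δ) (bar : Δ → Δ)
    (Nc : Δ → Δ → Δ → ℕ) (d : Δ → ℝ) (ω : Δ → ℂ) (Y : Δ → Δ → ℂ)
    (hFrob : ∀ l m n, Nc l m n = Nc (bar l) n m ∧ Nc l m n = Nc n (bar m) l)
    (hd0 : d z0 = 1) (hdbar : ∀ l, d (bar l) = d l)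
    (hdim : ∀ l m, ∑ n, (Nc l m n : ℝ) * d n = d l * d m)
    (hω : ∀ l, ‖ω l‖ = 1) (hω0 : ω z0 = 1)
    (hY : ∀ m n, Y m n = ∑ l, (ω m * ω n / ω l) * (Nc m n l : ℂ) * (d l : ℂ))
    (hnondeg : ∀ l, ∑ m, star (Y l m) * (d m : ℂ) =
      if l = z0 then ((∑ n, d n ^ 2 : ℝ) : ℂ) else 0) :
    (∑ l, d l ^ 2) = Complex.normSq (∑ l, (d l : ℂ) ^ 2 * ω l) := by
  have hw : ∑ l, (d l : ℂ) * ω l * ∑ m, star (Y l m) * d m = ((∑ n, d n ^ 2 : ℝ) : ℂ) := by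
    simp only [hnondeg, mul_ite, mul_zero, sum_ite_eq', mem_univ, if_true, hd0, hω0,
      Complex.ofReal_one, one_mul]
  have hz := sum_dim_mul_phase_mul_inner_eq_normSq hω
    (sum_fusion_mul_dim_left (fun l m n => (hFrob l m n).2) hdbar hdim) hY
  exact_mod_cast hw.symm.trans hz

/-- If the braiding data is non-degenerate, i.e.
`⟨y^λ, y^0⟩ = δ_{λ,0} w` for all `λ` (with `w = ∑ d_λ²` the global index),
then `w = |z|²` where `z = ∑ d_λ² ω_λ`. -/
theorem global_index_eq_normSq_of_nondegenerate
    {Δ : Type*} [Fintype Δ] [DecidableEq Δ] (z0 : Δ) (bar : Δ → Δ)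
    (Nc : Δ → Δ → Δ → ℕ) (d : Δ → ℝ) (ω : Δ → ℂ) (Y : Δ → Δ → ℂ)
    (hNcomm : ∀ l m n, Nc l m n = Nc m l n)
    (hNid : ∀ l m, Nc z0 l m = if l = m then 1 else 0)
    (hFrob : ∀ l m n, Nc l m n = Nc (bar l) n m ∧ Nc l m n = Nc n (bar m) l)
    (hassoc : ∀ l n r s, ∑ m, Nc l m n * Nc r s m = ∑ t, Nc l r t * Nc t s n)
    (hd : ∀ l, 0 < d l) (hd0 : d z0 = 1) (hdbar : ∀ l, d (bar l) = d l)
    (hdim : ∀ l m, ∑ n, (Nc l m n : ℝ) * d n = d l * d m)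
    (hω : ∀ l, ‖ω l‖ = 1) (hω0 : ω z0 = 1) (hωbar : ∀ l, ω (bar l) = ω l)
    (hY : ∀ m n, Y m n = ∑ l, (ω m * ω n / ω l) * (Nc m n l : ℂ) * (d l : ℂ))
    (hnondeg : ∀ l, ∑ m, star (Y l m) * (d m : ℂ) =
      if l = z0 then ((∑ n, d n ^ 2 : ℝ) : ℂ) else 0) :
    (∑ l, d l ^ 2) = Complex.normSq (∑ l, (d l : ℂ) ^ 2 * ω l) :=
  global_index_eq_normSq_of_nondegenerate_general z0 bar Nc d ω Y hFrob hd0 hdbar hdim hω hω0 hY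
    hnondeg
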